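/- Let G be a weighted graph in which every vertex has an outgoing edge, let v₀ be a vertex, and let T ∈ ℕ. There exists a simple lasso A·C^ω from v₀ such that val(A·C^ω, T) = val(G,T), i.e., the supremum of values over all infinite paths from v₀ is attained by a simple lasso. -/

import Mathlib

open scoped BigOperators

/-- A stopping-time distribution: pointwise nonnegative, total mass `1`,
with absolutely convergent expected time. -/
def IsStopDist (δ : ℕ → ℝ) : Prop :=
  (∀ t, 0 ≤ δ t) ∧ Summable δ ∧ (∑' t, δ t) = 1 ∧
    Summable (fun t : ℕ => (t : ℝ) * δ t)

/-- The expected (stopping) time of `δ`. -/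
noncomputable def expTime (δ : ℕ → ℝ) : ℝ := ∑' t : ℕ, (t : ℝ) * δ t

/-- The expected utility of the utility sequence `u` under `δ`. -/
noncomputable def expUtil (u δ : ℕ → ℝ) : ℝ := ∑' t : ℕ, u t * δ t

/-- The value of a utility sequence `u` under adversarial stopping-time
distributions with expected time `T`:
`val u T = inf { 𝔼_δ(u) | δ a stopping-time distribution with 𝔼_δ = T }`. -/
noncomputable def val (u : ℕ → ℝ) (T : ℕ) : ℝ :=
  sInf {x | ∃ δ : ℕ → ℝ, IsStopDist δ ∧ (Summable fun t => u t * δ t) ∧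
    expTime δ = (T : ℝ) ∧ x = expUtil u δ}

/-- The sum of the weights of the first `n` edges of the infinite path with
vertex sequence `p` in the weighted graph with weight function `w`. -/
noncomputable def sumW {V : Type*} (w : V → V → ℤ) (p : ℕ → V) (n : ℕ) : ℝ :=
  ∑ k ∈ Finset.range n, (w (p k) (p (k + 1)) : ℝ)

/-- The utility sequence induced by the path with vertex sequence `p`:
`u i = ∑_{k ≤ i} w(e_k)`. -/
noncomputable def pathUtil {V : Type*} (w : V → V → ℤ) (p : ℕ → V) : ℕ → ℝ :=
  fun i => sumW w p (i + 1)

/-- The value of the infinite path with vertex sequence `p` under adversarial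
stopping-time distributions with expected time `T`. -/
noncomputable def pathVal {V : Type*} (w : V → V → ℤ) (p : ℕ → V) (T : ℕ) : ℝ :=
  val (pathUtil w p) T

/-- `p` is (the vertex sequence of) an infinite path from `v₀` in the graph
with edge relation `E`. -/
def IsPath {V : Type*} (E : V → V → Prop) (v₀ : V) (p : ℕ → V) : Prop :=
  p 0 = v₀ ∧ ∀ i, E (p i) (p (i + 1))

/-- `ν = min_{0 ≤ t₁ ≤ T} inf_{t₂ ≥ T} (u t₂ - u t₁)/(t₂ - t₁)` for the
utility sequence `u` induced by the path `p`. -/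
noncomputable def nuPath {V : Type*} (w : V → V → ℤ) (p : ℕ → V) (T : ℕ) : ℝ :=
  sInf {x | ∃ t₁ t₂ : ℕ, t₁ ≤ T ∧ T ≤ t₂ ∧ t₁ < t₂ ∧
    x = (pathUtil w p t₂ - pathUtil w p t₁) / ((t₂ : ℝ) - (t₁ : ℝ))}

/-- `p` is a simple lasso `A·C^ω`: eventually periodic with period `c ≥ 1`
starting from position `a`, and all strict prefixes of the finite path `A·C`
are acyclic (the first `a + c` vertices are pairwise distinct). -/
def IsSimpleLasso {V : Type*} (p : ℕ → V) : Prop :=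
  ∃ a c : ℕ, 1 ≤ c ∧ (∀ i, a ≤ i → p (i + c) = p i) ∧
    ∀ i j, i < a + c → j < a + c → p i = p j → i = j

/-
Let `c` be the value of a path `q`. Every two-point stopping-time distribution on `t₁ ≤ T ≤ t₂`
with mean `T` bounds `c` by a chord of the utility sequence `u` of `q`; hence the slopes of `u`
from `(T, c)` to the left never exceed those to the right, and `u` lies above a line
`c + σ (t - T)`. Conversely, a utility sequence above that line has value at least `c`.
If the first cycle of a path above the line has weight at least `σ` times its length, looping
it forever yields a simple lasso still above the line; otherwise cutting it out keeps the path
above the line and lifts its tail. So every value is dominated by the value of a simple lasso,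
and there are only finitely many simple lassos.
-/
section Value

variable {u : ℕ → ℝ} {T : ℕ}

def valSet (u : ℕ → ℝ) (T : ℕ) : Set ℝ :=
  {x | ∃ δ : ℕ → ℝ, IsStopDist δ ∧ (Summable fun t => u t * δ t) ∧
    expTime δ = (T : ℝ) ∧ x = expUtil u δ}

theorem val_eq_sInf_valSet (u : ℕ → ℝ) (T : ℕ) : val u T = sInf (valSet u T) := rfl

def twoPoint (t₁ t₂ : ℕ) (p : ℝ) : ℕ → ℝ :=
  fun t => (if t = t₁ then p else 0) + (if t = t₂ then 1 - p else 0)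

theorem hasSum_mul_twoPoint (f : ℕ → ℝ) (t₁ t₂ : ℕ) (p : ℝ) :
    HasSum (fun t => f t * twoPoint t₁ t₂ p t) (f t₁ * p + f t₂ * (1 - p)) := by
  convert (hasSum_ite_eq t₁ (f t₁ * p)).add (hasSum_ite_eq t₂ (f t₂ * (1 - p))) using 2 with t
  simp only [twoPoint, mul_add]
  split_ifs <;> simp_all

theorem isStopDist_twoPoint (t₁ t₂ : ℕ) {p : ℝ} (hp₀ : 0 ≤ p) (hp₁ : p ≤ 1) :
    IsStopDist (twoPoint t₁ t₂ p) := by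
  have hmass := hasSum_mul_twoPoint (fun _ => 1) t₁ t₂ p
  simp only [one_mul, add_sub_cancel] at hmass
  refine ⟨fun t => ?_, hmass.summable, hmass.tsum_eq, (hasSum_mul_twoPoint _ t₁ t₂ p).summable⟩
  unfold twoPoint
  split_ifs <;> linarith

theorem expTime_twoPoint (t₁ t₂ : ℕ) (p : ℝ) :
    expTime (twoPoint t₁ t₂ p) = t₁ * p + t₂ * (1 - p) :=
  (hasSum_mul_twoPoint _ t₁ t₂ p).tsum_eq

theorem valSet_nonempty (u : ℕ → ℝ) (T : ℕ) : (valSet u T).Nonempty :=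
  ⟨_, twoPoint T T 1, isStopDist_twoPoint T T zero_le_one le_rfl,
    (hasSum_mul_twoPoint u T T 1).summable, by rw [expTime_twoPoint]; ring, rfl⟩

theorem add_mul_expTime_le_expUtil {α σ : ℝ} (h : ∀ t : ℕ, α + σ * t ≤ u t) {δ : ℕ → ℝ}
    (hδ : IsStopDist δ) (hu : Summable fun t => u t * δ t) :
    α + σ * expTime δ ≤ expUtil u δ := by
  obtain ⟨hδ₀, hδs, hδ₁, hδt⟩ := hδ
  have hline : HasSum (fun t : ℕ => α * δ t + σ * (t * δ t)) (α + σ * expTime δ) := by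
    simpa [hδ₁, expTime] using (hδs.hasSum.mul_left α).add (hδt.hasSum.mul_left σ)
  refine hasSum_le (fun t => ?_) hline hu.hasSum
  nlinarith [h t, hδ₀ t]

theorem bddBelow_valSet {α σ : ℝ} (h : ∀ t : ℕ, α + σ * t ≤ u t) (T : ℕ) :
    BddBelow (valSet u T) := by
  refine ⟨α + σ * T, ?_⟩
  rintro _ ⟨δ, hδ, hu, hT, rfl⟩
  simpa [hT] using add_mul_expTime_le_expUtil h hδ hu

theorem add_mul_le_val {α σ : ℝ} (h : ∀ t : ℕ, α + σ * t ≤ u t) (T : ℕ) :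
    α + σ * T ≤ val u T := by
  rw [val_eq_sInf_valSet]
  refine le_csInf (valSet_nonempty u T) ?_
  rintro _ ⟨δ, hδ, hu, hT, rfl⟩
  simpa [hT] using add_mul_expTime_le_expUtil h hδ hu

theorem val_mul_le_chord (hb : BddBelow (valSet u T)) {t₁ t₂ : ℕ} (h₁ : t₁ ≤ T) (h₂ : T ≤ t₂)
    (h : t₁ < t₂) :
    val u T * (t₂ - t₁) ≤ u t₁ * (t₂ - T) + u t₂ * (T - t₁) := by
  have hT₁ : (t₁ : ℝ) ≤ T := by exact_mod_cast h₁
  have hT₂ : (T : ℝ) ≤ t₂ := by exact_mod_cast h₂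
  have hd : (0 : ℝ) < t₂ - t₁ := by
    have : (t₁ : ℝ) < t₂ := by exact_mod_cast h
    linarith
  set p : ℝ := (t₂ - T) / (t₂ - t₁)
  have hp₀ : 0 ≤ p := div_nonneg (by linarith) hd.le
  have hp₁ : p ≤ 1 := (div_le_one hd).mpr (by linarith)
  have hmean : expTime (twoPoint t₁ t₂ p) = T := by
    rw [expTime_twoPoint]
    simp only [p]
    field_simp
    ring
  have hval : val u T ≤ u t₁ * p + u t₂ * (1 - p) := by
    rw [val_eq_sInf_valSet]
    exact csInf_le hb ⟨_, isStopDist_twoPoint t₁ t₂ hp₀ hp₁,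
      (hasSum_mul_twoPoint u t₁ t₂ p).summable, hmean, (hasSum_mul_twoPoint u t₁ t₂ p).tsum_eq.symm⟩
  calc val u T * (t₂ - t₁) ≤ (u t₁ * p + u t₂ * (1 - p)) * (t₂ - t₁) :=
        mul_le_mul_of_nonneg_right hval hd.le
    _ = u t₁ * (t₂ - T) + u t₂ * (T - t₁) := by
        simp only [p]
        field_simp
        ring

end Value

section SupportingLine

variable {u : ℕ → ℝ} {M : ℝ}

theorem sub_mul_le_of_sub_le_succ (hstep : ∀ t, u t - M ≤ u (t + 1)) (m n : ℕ) :
    u m - M * n ≤ u (m + n) := by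
  induction n with
  | zero => simp
  | succ n ih =>
    have := hstep (m + n)
    push_cast
    rw [← add_assoc]
    linarith

/-- The slopes of `u` from `(T, c)` to the right are bounded below thanks to `hstep`, so their
infimum `σ` exists; the chord condition says it lies above every slope to the left. -/
theorem exists_supporting_line {c : ℝ} {T : ℕ}
    (hchord : ∀ t₁ t₂ : ℕ, t₁ ≤ T → T ≤ t₂ → t₁ < t₂ →
      c * (t₂ - t₁) ≤ u t₁ * (t₂ - T) + u t₂ * (T - t₁))
    (hstep : ∀ t, u t - M ≤ u (t + 1)) :
    ∃ σ : ℝ, ∀ t : ℕ, c + σ * (t - T) ≤ u t := by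
  have hcT : c ≤ u T := by simpa using hchord T (T + 1) le_rfl (by omega) (by omega)
  set slope : ℕ → ℝ := fun k => (u (T + (k + 1)) - c) / (k + 1)
  have hslope : BddBelow (Set.range slope) := by
    refine ⟨-M, ?_⟩
    rintro _ ⟨k, rfl⟩
    rw [le_div_iff₀ (by positivity)]
    have := sub_mul_le_of_sub_le_succ hstep T (k + 1)
    push_cast at this
    linarith
  refine ⟨⨅ k, slope k, fun t => ?_⟩
  rcases lt_trichotomy t T with ht | rfl | ht
  · have hd : (0 : ℝ) < T - t := by
      have : (t : ℝ) < T := by exact_mod_cast ht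
      linarith
    have hle : (c - u t) / (T - t) ≤ ⨅ k, slope k := by
      refine le_ciInf fun k => ?_
      rw [div_le_div_iff₀ hd (by positivity)]
      have := hchord t (T + (k + 1)) ht.le (by omega) (by omega)
      push_cast at this
      nlinarith
    rw [div_le_iff₀ hd] at hle
    nlinarith
  · simpa using hcT
  · obtain ⟨k, rfl⟩ := Nat.exists_eq_add_of_lt ht
    have hle := ciInf_le hslope k
    rw [le_div_iff₀ (by positivity), ← add_assoc] at hle
    push_cast
    linarith

theorem exists_supporting_line_val (hstep : ∀ t, u t - M ≤ u (t + 1)) (T : ℕ) :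
    ∃ σ : ℝ, ∀ t : ℕ, val u T + σ * (t - T) ≤ u t := by
  have hb : BddBelow (valSet u T) :=
    bddBelow_valSet (α := u 0) (σ := -M) (fun t => by
      have := sub_mul_le_of_sub_le_succ hstep 0 t
      rw [zero_add] at this
      linarith) T
  exact exists_supporting_line (fun t₁ t₂ h₁ h₂ h => val_mul_le_chord hb h₁ h₂ h) hstep

end SupportingLine

section Paths

variable {V : Type*} {E : V → V → Prop} {w : V → V → ℤ} {v₀ : V} {r p : ℕ → V} {a c n t : ℕ}

theorem sumW_succ (w : V → V → ℤ) (p : ℕ → V) (n : ℕ) :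
    sumW w p (n + 1) = sumW w p n + w (p n) (p (n + 1)) :=
  Finset.sum_range_succ _ _

theorem sumW_eq_intCast (w : V → V → ℤ) (p : ℕ → V) (n : ℕ) :
    sumW w p n = ((∑ k ∈ Finset.range n, w (p k) (p (k + 1)) : ℤ) : ℝ) := by
  simp [sumW]

theorem sumW_congr (h : ∀ t ≤ n, p t = r t) : sumW w p n = sumW w r n :=
  Finset.sum_congr rfl fun k hk => by
    rw [Finset.mem_range] at hk
    rw [h k hk.le, h (k + 1) hk]

theorem sumW_le {M : ℝ} (hM : ∀ x y, (w x y : ℝ) ≤ M) (p : ℕ → V) (n : ℕ) :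
    sumW w p n ≤ M * n := by
  simpa [sumW, mul_comm] using
    Finset.sum_le_card_nsmul (Finset.range n) _ M fun k _ => hM (p k) (p (k + 1))

theorem pathUtil_sub_le_succ {M : ℝ} (hM : ∀ x y, -M ≤ (w x y : ℝ)) (p : ℕ → V) (t : ℕ) :
    pathUtil w p t - M ≤ pathUtil w p (t + 1) := by
  have := hM (p (t + 1)) (p (t + 2))
  simp only [pathUtil, sumW_succ w p (t + 1)]
  linarith

/-- The index map of the lasso `A·C^ω` with `|A| = a` and `|C| = c`. -/
def lassoIndex (a c t : ℕ) : ℕ := if t < a then t else a + (t - a) % c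

theorem lassoIndex_of_lt (h : t < a + c) : lassoIndex a c t = t := by
  unfold lassoIndex
  split_ifs with ht
  · rfl
  · rw [Nat.mod_eq_of_lt (by omega)]
    omega

theorem lassoIndex_lt (hc : 0 < c) (t : ℕ) : lassoIndex a c t < a + c := by
  unfold lassoIndex
  split_ifs
  · omega
  · have := Nat.mod_lt (t - a) hc
    omega

theorem lassoIndex_add_self (h : a ≤ t) : lassoIndex a c (t + c) = lassoIndex a c t := by
  unfold lassoIndex
  rw [if_neg (by omega), if_neg (by omega), Nat.sub_add_comm h, Nat.add_mod_right]

theorem apply_add_mul_eq (hper : ∀ i, a ≤ i → p (i + c) = p i) (h : a ≤ t) (k : ℕ) :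
    p (t + c * k) = p t := by
  induction k with
  | zero => simp
  | succ k ih => rw [mul_add_one, ← add_assoc, hper _ (by omega), ih]

theorem apply_lassoIndex (hper : ∀ i, a ≤ i → p (i + c) = p i) (t : ℕ) :
    p (lassoIndex a c t) = p t := by
  unfold lassoIndex
  split_ifs with ht
  · rfl
  · conv_rhs => rw [← Nat.add_sub_of_le (not_lt.mp ht), ← Nat.mod_add_div (t - a) c, ← add_assoc]
    exact (apply_add_mul_eq hper (by omega) _).symm

theorem isPath_of_periodic (hr : IsPath E v₀ r) (hc : 0 < c)
    (hper : ∀ i, a ≤ i → p (i + c) = p i) (hpr : ∀ t ≤ a + c, p t = r t) :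
    IsPath E v₀ p := by
  refine ⟨(hpr 0 (Nat.zero_le _)).trans hr.1, fun t => ?_⟩
  induction t using Nat.strong_induction_on with
  | _ t ih =>
    by_cases ht : t < a + c
    · rw [hpr t ht.le, hpr (t + 1) ht]
      exact hr.2 t
    · obtain ⟨s, rfl⟩ := Nat.exists_eq_add_of_le (not_lt.mp ht)
      rw [show a + c + s + 1 = (a + s + 1) + c by omega, show a + c + s = (a + s) + c by omega,
        hper _ (by omega), hper _ (by omega)]
      exact ih _ (by omega)

theorem sumW_add_period (hper : ∀ i, a ≤ i → p (i + c) = p i) {n : ℕ} (hn : a ≤ n) :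
    sumW w p (n + c) = sumW w p n + (sumW w p (a + c) - sumW w p a) := by
  induction n, hn using Nat.le_induction with
  | base => ring
  | succ n hn ih =>
    rw [show n + 1 + c = n + c + 1 by omega, sumW_succ, sumW_succ, ih,
      show n + c + 1 = n + 1 + c by omega, hper n hn, hper (n + 1) (by omega)]
    ring

theorem le_pathUtil_of_periodic {b σ : ℝ} (hc : 0 < c) (hper : ∀ i, a ≤ i → p (i + c) = p i)
    (hcyc : σ * c ≤ sumW w p (a + c) - sumW w p a)
    (hpre : ∀ t, t < a + c → b + σ * t ≤ pathUtil w p t) (t : ℕ) :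
    b + σ * t ≤ pathUtil w p t := by
  induction t using Nat.strong_induction_on with
  | _ t ih =>
    by_cases ht : t < a + c
    · exact hpre t ht
    · obtain ⟨s, rfl⟩ := Nat.exists_eq_add_of_le (not_lt.mp ht)
      have hs := ih (a + s) (by omega)
      have hsum := sumW_add_period (w := w) hper (n := a + s + 1) (by omega)
      simp only [pathUtil] at hs ⊢
      rw [show a + c + s + 1 = a + s + 1 + c by omega, hsum]
      push_cast at hs ⊢
      nlinarith

end Paths

section CycleRemoval

variable {V : Type*} {E : V → V → Prop} {w : V → V → ℤ} {v₀ : V} {r : ℕ → V} {a c t : ℕ}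

def cutCycle (r : ℕ → V) (a c : ℕ) : ℕ → V := fun t => if t < a then r t else r (t + c)

theorem cutCycle_of_le (hrep : r (a + c) = r a) (h : t ≤ a) : cutCycle r a c t = r t := by
  unfold cutCycle
  split_ifs with ht
  · rfl
  · rw [show t = a by omega, hrep]

theorem cutCycle_of_ge (h : a ≤ t) : cutCycle r a c t = r (t + c) := if_neg (by omega)

theorem isPath_cutCycle (hr : IsPath E v₀ r) (hrep : r (a + c) = r a) :
    IsPath E v₀ (cutCycle r a c) := by
  refine ⟨(cutCycle_of_le hrep (Nat.zero_le _)).trans hr.1, fun t => ?_⟩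
  by_cases ht : t < a
  · rw [cutCycle_of_le hrep ht.le, cutCycle_of_le hrep ht]
    exact hr.2 t
  · rw [cutCycle_of_ge (not_lt.mp ht), cutCycle_of_ge (by omega), Nat.add_right_comm]
    exact hr.2 (t + c)

theorem sumW_cutCycle (hrep : r (a + c) = r a) {n : ℕ} (hn : a ≤ n) :
    sumW w (cutCycle r a c) n = sumW w r (n + c) - (sumW w r (a + c) - sumW w r a) := by
  induction n, hn using Nat.le_induction with
  | base =>
    rw [sumW_congr fun t ht => cutCycle_of_le hrep ht]
    ring
  | succ n hn ih =>
    rw [sumW_succ, ih, cutCycle_of_ge hn, cutCycle_of_ge (by omega),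
      show n + 1 + c = n + c + 1 by omega, sumW_succ]
    ring

theorem pathUtil_cutCycle (hrep : r (a + c) = r a) (h : a ≤ t + 1) :
    pathUtil w (cutCycle r a c) t = pathUtil w r (t + c) - (sumW w r (a + c) - sumW w r a) := by
  simp only [pathUtil]
  rw [sumW_cutCycle hrep h, Nat.add_right_comm]

end CycleRemoval

section FirstRepeat

variable {V : Type*} [Finite V]

theorem le_card_of_injOn_lt {r : ℕ → V} {n : ℕ}
    (h : ∀ i j, i < n → j < n → r i = r j → i = j) : n ≤ Nat.card V := by
  simpa using Nat.card_le_card_of_injective (fun i : Fin n => r i)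
    fun i j hij => Fin.ext (h i j i.2 j.2 hij)

theorem exists_first_repeat (r : ℕ → V) :
    ∃ a c, 0 < c ∧ r (a + c) = r a ∧ ∀ i j, i < a + c → j < a + c → r i = r j → i = j := by
  classical
  have hex : ∃ j, ∃ i < j, r i = r j := by
    obtain ⟨x, y, hxy, h⟩ := Finite.exists_ne_map_eq_of_infinite r
    rcases hxy.lt_or_gt with hlt | hlt
    exacts [⟨y, x, hlt, h⟩, ⟨x, y, hlt, h.symm⟩]
  obtain ⟨i, hi, hij⟩ := Nat.find_spec hex
  refine ⟨i, Nat.find hex - i, by omega, by rw [Nat.add_sub_cancel' hi.le, hij], ?_⟩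
  intro x y hx hy hxy
  by_contra hne
  rcases lt_or_gt_of_ne hne with hlt | hlt
  · exact Nat.find_min hex (m := y) (by omega) ⟨x, hlt, hxy⟩
  · exact Nat.find_min hex (m := x) (by omega) ⟨y, hlt, hxy.symm⟩

end FirstRepeat

theorem exists_pos_le_sub_intCast (x : ℕ → ℝ) (N : ℕ) :
    ∃ ε > 0, ∀ d ≤ N, ∀ z : ℤ, (z : ℝ) < x d → ε ≤ x d - z := by
  obtain ⟨d₀, -, hd₀⟩ :=
    (Finset.range (N + 1)).exists_min_image (fun d => x d + 1 - ⌈x d⌉) ⟨0, by simp⟩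
  refine ⟨x d₀ + 1 - ⌈x d₀⌉, by linarith [Int.ceil_lt_add_one (x d₀)], fun d hd z hz => ?_⟩
  have hceil : ((z + 1 : ℤ) : ℝ) ≤ ⌈x d⌉ := by exact_mod_cast Int.lt_ceil.mpr hz
  have := hd₀ d (Finset.mem_range.mpr (by omega))
  push_cast at hceil
  linarith

section Lassos

variable {V : Type*} {E : V → V → Prop} {w : V → V → ℤ} {v₀ : V}

theorem exists_simpleLasso_of_cycle {r : ℕ → V} {a c : ℕ} {b σ : ℝ} (hr : IsPath E v₀ r)
    (hc : 0 < c) (hrep : r (a + c) = r a)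
    (hinj : ∀ i j, i < a + c → j < a + c → r i = r j → i = j)
    (hline : ∀ t, b + σ * t ≤ pathUtil w r t)
    (hcyc : σ * c ≤ sumW w r (a + c) - sumW w r a) :
    ∃ p, IsPath E v₀ p ∧ IsSimpleLasso p ∧ ∀ t, b + σ * t ≤ pathUtil w p t := by
  set p : ℕ → V := fun t => r (lassoIndex a c t)
  have hper : ∀ i, a ≤ i → p (i + c) = p i := fun i hi => congrArg r (lassoIndex_add_self hi)
  have hpr : ∀ t ≤ a + c, p t = r t := by
    intro t ht
    rcases ht.lt_or_eq with ht | rfl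
    · exact congrArg r (lassoIndex_of_lt ht)
    · rw [hper a le_rfl, hrep]
      exact congrArg r (lassoIndex_of_lt (by omega))
  refine ⟨p, isPath_of_periodic hr hc hper hpr,
    ⟨a, c, hc, hper, fun i j hi hj h => hinj i j hi hj (by rwa [hpr i hi.le, hpr j hj.le] at h)⟩,
    le_pathUtil_of_periodic hc hper ?_ fun t ht => ?_⟩
  · rwa [sumW_congr hpr, sumW_congr fun t ht => hpr t (by omega)]
  · have hpre : pathUtil w p t = pathUtil w r t := sumW_congr fun s hs => hpr s (by omega)
    exact hpre ▸ hline t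

theorem exists_simpleLasso_or_cutCycle [Finite V] {r : ℕ → V} {b b' σ ε : ℝ}
    (hε : ∀ d ≤ Nat.card V, ∀ z : ℤ, (z : ℝ) < σ * d → ε ≤ σ * d - z) (hr : IsPath E v₀ r)
    (habove : ∀ t, b + σ * t ≤ pathUtil w r t)
    (htail : ∀ t, Nat.card V ≤ t → b' + σ * t ≤ pathUtil w r t) :
    (∃ p, IsPath E v₀ p ∧ IsSimpleLasso p ∧ ∀ t, b + σ * t ≤ pathUtil w p t) ∨
      ∃ r', IsPath E v₀ r' ∧ (∀ t, b + σ * t ≤ pathUtil w r' t) ∧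
        ∀ t, Nat.card V ≤ t → b' + ε + σ * t ≤ pathUtil w r' t := by
  obtain ⟨a, c, hc, hrep, hinj⟩ := exists_first_repeat r
  have hN : a + c ≤ Nat.card V := le_card_of_injOn_lt hinj
  by_cases hcyc : σ * c ≤ sumW w r (a + c) - sumW w r a
  · exact .inl (exists_simpleLasso_of_cycle hr hc hrep hinj habove hcyc)
  set gain := σ * c - (sumW w r (a + c) - sumW w r a)
  have hgain : ε ≤ gain := by
    obtain ⟨z, hz⟩ : ∃ z : ℤ, sumW w r (a + c) - sumW w r a = z :=
      ⟨_, by rw [sumW_eq_intCast, sumW_eq_intCast, ← Int.cast_sub]⟩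
    rw [hz] at hcyc
    simp only [gain, hz]
    exact hε c (by omega) z (not_le.mp hcyc)
  have hcut : ∀ t, a ≤ t + 1 →
      pathUtil w (cutCycle r a c) t = pathUtil w r (t + c) + gain - σ * c :=
    fun t ht => by rw [pathUtil_cutCycle hrep ht]; ring
  refine .inr ⟨cutCycle r a c, isPath_cutCycle hr hrep, fun t => ?_, fun t ht => ?_⟩
  · by_cases ht : a ≤ t + 1
    · have := habove (t + c)
      push_cast at this
      rw [hcut t ht]
      nlinarith
    · have hpre : pathUtil w (cutCycle r a c) t = pathUtil w r t :=
        sumW_congr fun s hs => cutCycle_of_le hrep (by omega)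
      exact hpre ▸ habove t
  · have := htail (t + c) (by omega)
    push_cast at this
    rw [hcut t (by omega)]
    linarith

/-- Each cut lifts the lower bound on positions `≥ Nat.card V` by `ε`, and that bound cannot
exceed `max w · (Nat.card V + 1) - σ · Nat.card V`; so after finitely many cuts the first cycle
has nonnegative excess over `σ`. -/
theorem exists_simpleLasso_above [Finite V] {q : ℕ → V} (hq : IsPath E v₀ q) {b σ : ℝ}
    (hline : ∀ t, b + σ * t ≤ pathUtil w q t) :
    ∃ p, IsPath E v₀ p ∧ IsSimpleLasso p ∧ ∀ t, b + σ * t ≤ pathUtil w p t := by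
  set N := Nat.card V
  obtain ⟨ε, hε, hεle⟩ := exists_pos_le_sub_intCast (fun d => σ * d) N
  obtain ⟨M, hM⟩ := (Set.finite_range fun e : V × V => (w e.1 e.2 : ℝ)).bddAbove
  set U := M * (N + 1) - σ * N
  have hU : ∀ r b', (∀ t, N ≤ t → b' + σ * t ≤ pathUtil w r t) → b' ≤ U := fun r b' htail => by
    have := sumW_le (fun x y => hM ⟨(x, y), rfl⟩) r (N + 1)
    have := htail N le_rfl
    simp only [pathUtil] at *
    push_cast at *
    linarith
  suffices key : ∀ k : ℕ, ∀ r b', IsPath E v₀ r → (∀ t, b + σ * t ≤ pathUtil w r t) →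
      (∀ t, N ≤ t → b' + σ * t ≤ pathUtil w r t) → U - b' < k * ε →
      ∃ p, IsPath E v₀ p ∧ IsSimpleLasso p ∧ ∀ t, b + σ * t ≤ pathUtil w p t by
    obtain ⟨k, hk⟩ := exists_nat_gt ((U - b) / ε)
    exact key k q b hq hline (fun t _ => hline t) ((div_lt_iff₀ hε).mp hk)
  intro k
  induction k with
  | zero =>
    intro r b' _ _ htail hk
    push_cast at hk
    linarith [hU r b' htail]
  | succ k ih =>
    intro r b' hr habove htail hk
    obtain hlasso | ⟨r', hr', habove', htail'⟩ :=
      exists_simpleLasso_or_cutCycle (ε := ε) hεle hr habove htail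
    · exact hlasso
    · exact ih r' (b' + ε) hr' habove' htail' (by push_cast at hk; linarith)

end Lassos

theorem finite_setOf_isSimpleLasso {V : Type*} [Finite V] :
    {p : ℕ → V | IsSimpleLasso p}.Finite := by
  set N := Nat.card V
  refine (Set.finite_range fun x : Fin (N + 1) × Fin (N + 1) × (Fin (N + 1) → V) =>
    fun t => x.2.2 (Fin.ofNat (N + 1) (lassoIndex x.1 x.2.1 t))).subset ?_
  rintro p ⟨a, c, hc, hper, hinj⟩
  have hN : a + c ≤ N := le_card_of_injOn_lt hinj
  refine ⟨(⟨a, by omega⟩, ⟨c, by omega⟩, fun i => p i), funext fun t => ?_⟩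
  show p (Fin.ofNat (N + 1) (lassoIndex a c t)) = p t
  rw [Fin.val_ofNat, Nat.mod_eq_of_lt (by linarith [lassoIndex_lt (a := a) hc t])]
  exact apply_lassoIndex hper t

theorem exists_simpleLasso_pathVal_ge {V : Type*} [Finite V] {E : V → V → Prop}
    (w : V → V → ℤ) {v₀ : V} {q : ℕ → V} (hq : IsPath E v₀ q) (T : ℕ) :
    ∃ p, IsPath E v₀ p ∧ IsSimpleLasso p ∧ pathVal w q T ≤ pathVal w p T := by
  obtain ⟨M, hM⟩ := (Set.finite_range fun e : V × V => -(w e.1 e.2 : ℝ)).bddAbove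
  have hstep := pathUtil_sub_le_succ (w := w) (M := M) (fun x y => by
    linarith [hM ⟨(x, y), rfl⟩]) q
  obtain ⟨σ, hσ⟩ : ∃ σ : ℝ, ∀ t : ℕ, pathVal w q T + σ * (t - T) ≤ pathUtil w q t :=
    exists_supporting_line_val hstep T
  obtain ⟨p, hp, hlasso, hline⟩ :=
    exists_simpleLasso_above (w := w) (b := pathVal w q T - σ * T) hq fun t => by
      linarith [hσ t]
  have hval : pathVal w q T - σ * T + σ * T ≤ pathVal w p T := add_mul_le_val hline T
  exact ⟨p, hp, hlasso, by linarith⟩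

/-- Simple lassos are sufficient: in a finite weighted graph in which every
vertex has an outgoing edge, the supremum of the values of all infinite paths
from `v₀` is attained by a simple lasso `A·C^ω`. -/
theorem simple_lasso_attains_value
    {V : Type*} [Fintype V]
    (E : V → V → Prop) (w : V → V → ℤ)
    (hout : ∀ v : V, ∃ v' : V, E v v')
    (v₀ : V) (T : ℕ) :
    ∃ p : ℕ → V, IsPath E v₀ p ∧ IsSimpleLasso p ∧
      pathVal w p T =
        sSup {x | ∃ q : ℕ → V, IsPath E v₀ q ∧ x = pathVal w q T} := by
  choose next hnext using hout
  have hpath : IsPath E v₀ fun n => next^[n] v₀ :=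
    ⟨rfl, fun n => by simpa only [Function.iterate_succ_apply'] using hnext _⟩
  obtain ⟨p₀, hp₀, hlasso₀, -⟩ := exists_simpleLasso_pathVal_ge w hpath T
  obtain ⟨p, ⟨hp, hlasso⟩, hmax⟩ := Set.exists_max_image {p | IsPath E v₀ p ∧ IsSimpleLasso p}
    (pathVal w · T) (finite_setOf_isSimpleLasso.subset fun _ h => h.2) ⟨p₀, hp₀, hlasso₀⟩
  have hgreatest : IsGreatest {x | ∃ q : ℕ → V, IsPath E v₀ q ∧ x = pathVal w q T}
      (pathVal w p T) := by
    refine ⟨⟨p, hp, rfl⟩, ?_⟩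
    rintro _ ⟨q, hq, rfl⟩
    obtain ⟨p', hp', hlasso', hle⟩ := exists_simpleLasso_pathVal_ge w hq T
    exact hle.trans (hmax p' ⟨hp', hlasso'⟩)
  exact ⟨p, hp, hlasso, hgreatest.csSup_eq.symm⟩
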